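/- (Orthogonality of the GEV₂ reparametrisation with transformed scale parameter σ̃(ρ,ξ) = C(ρ)·ξ·exp((1−γ)ξ).) For all σ > 0 and ξ > 0, ∫_0^∞ s_σ(x;σ,ξ) · ( σ·((1−γ) + 1/ξ)·s_σ(x;σ,ξ) + s_ξ(x;σ,ξ) ) · f(x;σ,ξ) dx = 0, where γ is the Euler–Mascheroni constant. Equivalently, the Fisher cross-information between the new parameters ρ and ξ vanishes, since the score in ρ is proportional to s_σ and the score in ξ under the reparametrisation is (∂σ̃/∂ξ)·s_σ + s_ξ = σ̃·((1−γ)+1/ξ)·s_σ + s_ξ by the chain rule. -/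

import Mathlib

open MeasureTheory Real

/-- Density of the two-parameter GEV distribution GEV₂(σ,ξ), for x > 0 and ξ > 0. -/
noncomputable def gev2Pdf (σ ξ x : ℝ) : ℝ :=
  (1 / σ) * (ξ * x / σ) ^ (-1 - 1 / ξ) * Real.exp (-(ξ * x / σ) ^ (-1 / ξ))

/-- Score of the GEV₂ distribution with respect to the scale parameter σ. -/
noncomputable def gev2ScoreSigma (σ ξ x : ℝ) : ℝ :=
  (1 / (ξ * σ)) * (1 - (ξ * x / σ) ^ (-1 / ξ))

/-- Score of the GEV₂ distribution with respect to the shape parameter ξ. -/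
noncomputable def gev2ScoreXi (σ ξ x : ℝ) : ℝ :=
  (1 / ξ ^ 2) * (Real.log (ξ * x / σ) - 1) * (1 - (ξ * x / σ) ^ (-1 / ξ)) - 1 / ξ

/-!
Substituting `x = (σ / ξ) y^(-ξ)` carries GEV₂(σ, ξ) to the standard exponential law
`e^(-y) dy`, and turns `s_σ` into `(1 - y) / (ξσ)` and `log (ξx/σ)` into `-ξ log y`.
The integrand becomes `((1 - y)² (1 - γ - log y) - (1 - y)) e^(-y) / (ξ²σ)`, a combination
of `Γ(n+1) = n!` and `Γ'(n+1) = n! (H_n - γ)` for `n ≤ 2`, and these give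
`(1 - γ) · 1 - (1 - γ) - 0 = 0`.
-/

open Set

local notation "γ" => Real.eulerMascheroniConstant

lemma abs_log_le_rpow_add_rpow_neg_div {t ε : ℝ} (ht : 0 < t) (hε : 0 < ε) :
    |log t| ≤ (t ^ ε + t ^ (-ε)) / ε := by
  have hpos : 0 ≤ t ^ ε / ε := by positivity
  have hneg : 0 ≤ t ^ (-ε) / ε := by positivity
  rcases le_or_gt 1 t with h1 | h1
  · rw [abs_of_nonneg (log_nonneg h1), add_div]
    linarith [log_le_rpow_div ht.le hε]
  · rw [abs_of_neg (log_neg ht h1), ← log_inv, add_div, rpow_neg ht.le, ← inv_rpow ht.le]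
    linarith [log_le_rpow_div (inv_pos.2 ht).le hε]

lemma integrableOn_rpow_mul_log_mul_exp_neg {s : ℝ} (hs : 0 < s) :
    IntegrableOn (fun t ↦ t ^ (s - 1) * log t * exp (-t)) (Ioi 0) := by
  have hε : 0 < s / 2 := half_pos hs
  have hdom := ((GammaIntegral_convergent (by linarith : 0 < s + s / 2)).add
    (GammaIntegral_convergent hε)).const_mul (s / 2)⁻¹
  refine hdom.mono' (by fun_prop) ((ae_restrict_iff' measurableSet_Ioi).2 (.of_forall ?_))
  intro t (ht : 0 < t)
  have hpow : 0 < t ^ (s - 1) := rpow_pos_of_pos ht _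
  calc ‖t ^ (s - 1) * log t * exp (-t)‖ = t ^ (s - 1) * exp (-t) * |log t| := by
        rw [Real.norm_eq_abs, abs_mul, abs_mul, abs_of_pos hpow, abs_of_pos (exp_pos _)]; ring
    _ ≤ t ^ (s - 1) * exp (-t) * ((t ^ (s / 2) + t ^ (-(s / 2))) / (s / 2)) :=
        mul_le_mul_of_nonneg_left (abs_log_le_rpow_add_rpow_neg_div ht hε) (by positivity)
    _ = (s / 2)⁻¹ * (exp (-t) * t ^ (s + s / 2 - 1) + exp (-t) * t ^ (s / 2 - 1)) := by
        rw [show s + s / 2 - 1 = (s - 1) + s / 2 by ring,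
          show s / 2 - 1 = (s - 1) + -(s / 2) by ring, rpow_add ht, rpow_add ht]
        ring

lemma integrableOn_pow_mul_exp_neg (n : ℕ) :
    IntegrableOn (fun t ↦ t ^ n * exp (-t)) (Ioi 0) := by
  refine (GammaIntegral_convergent n.cast_add_one_pos).congr_fun (fun t _ ↦ ?_) measurableSet_Ioi
  simp only [add_sub_cancel_right, rpow_natCast, mul_comm]

lemma integral_pow_mul_exp_neg (n : ℕ) : ∫ t in Ioi 0, t ^ n * exp (-t) = n.factorial := by
  rw [← Gamma_nat_eq_factorial, Gamma_eq_integral n.cast_add_one_pos]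
  refine setIntegral_congr_fun measurableSet_Ioi fun t _ ↦ ?_
  simp only [add_sub_cancel_right, rpow_natCast, mul_comm]

lemma integral_pow_mul_log_mul_exp_neg (n : ℕ) :
    ∫ t in Ioi 0, t ^ n * log t * exp (-t) = n.factorial * (harmonic n - γ) := by
  have hre : 0 < ((n : ℂ) + 1).re := by simpa using n.cast_add_one_pos
  have hGamma := (Complex.hasDerivAt_GammaIntegral hre).congr_of_eventuallyEq <|
    Filter.eventually_of_mem ((Complex.continuous_re.isOpen_preimage _ isOpen_Ioi).mem_nhds hre)
      fun s hs ↦ Complex.Gamma_eq_integral hs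
  have key := hGamma.unique (Complex.hasDerivAt_Gamma_nat n)
  simp_rw [add_sub_cancel_right, Complex.cpow_natCast] at key
  rw [← Complex.ofReal_inj, ← integral_complex_ofReal]
  push_cast [mul_assoc] at key ⊢
  linear_combination key

lemma integrableOn_pow_mul_log_mul_exp_neg (n : ℕ) :
    IntegrableOn (fun t ↦ t ^ n * log t * exp (-t)) (Ioi 0) := by
  simpa using integrableOn_rpow_mul_log_mul_exp_neg n.cast_add_one_pos

lemma integrableOn_pow_mul_add_mul_log_mul_exp_neg (n : ℕ) (a b : ℝ) :
    IntegrableOn (fun t ↦ t ^ n * (a + b * log t) * exp (-t)) (Ioi 0) := by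
  refine IntegrableOn.congr_fun (((integrableOn_pow_mul_exp_neg n).const_mul a).add
    ((integrableOn_pow_mul_log_mul_exp_neg n).const_mul b)) (fun t _ ↦ ?_) measurableSet_Ioi
  simp only [Pi.add_apply]
  ring

lemma integral_pow_mul_add_mul_log_mul_exp_neg (n : ℕ) (a b : ℝ) :
    ∫ t in Ioi 0, t ^ n * (a + b * log t) * exp (-t) =
      n.factorial * (a + b * (harmonic n - γ)) := by
  have hsplit (t : ℝ) : t ^ n * (a + b * log t) * exp (-t) =
      a * (t ^ n * exp (-t)) + b * (t ^ n * log t * exp (-t)) := by ring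
  simp_rw [hsplit]
  rw [integral_add ((integrableOn_pow_mul_exp_neg n).const_mul a)
    ((integrableOn_pow_mul_log_mul_exp_neg n).const_mul b), integral_const_mul,
    integral_const_mul, integral_pow_mul_exp_neg, integral_pow_mul_log_mul_exp_neg]
  ring

lemma integral_sum_pow_mul_add_mul_log_mul_exp_neg {N : ℕ} (a b : Fin N → ℝ) :
    ∫ t in Ioi 0, (∑ i : Fin N, t ^ (i : ℕ) * (a i + b i * log t)) * exp (-t) =
      ∑ i : Fin N, (i : ℕ).factorial * (a i + b i * (harmonic (i : ℕ) - γ)) := by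
  simp_rw [Finset.sum_mul]
  rw [integral_finsetSum _ fun (i : Fin N) _ ↦
    integrableOn_pow_mul_add_mul_log_mul_exp_neg i (a i) (b i)]
  exact Finset.sum_congr rfl fun i _ ↦ integral_pow_mul_add_mul_log_mul_exp_neg i (a i) (b i)

lemma integral_one_sub_sq_mul_sub_log_sub_one_sub_mul_exp_neg (c : ℝ) :
    ∫ y in Ioi 0, ((1 - y) ^ 2 * (c - log y) - (1 - y)) * exp (-y) = c - (1 - γ) := by
  -- the coefficients of `yⁱ` and `yⁱ log y` in the expansion of the integrand
  have h := integral_sum_pow_mul_add_mul_log_mul_exp_neg ![c - 1, 1 - 2 * c, c] ![-1, 2, -1]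
  norm_num [Fin.sum_univ_three, Matrix.cons_val_two, harmonic] at h
  convert h using 1
  · congr 1 with y
    ring
  · ring

section ExponentialSubstitution

variable {σ ξ y : ℝ}

lemma mul_div_mul_div_cancel (hσ : σ ≠ 0) (hξ : ξ ≠ 0) (u : ℝ) :
    ξ * (σ / ξ * u) / σ = u := by
  field_simp

lemma rpow_neg_rpow_neg_one_div (hy : 0 < y) (hξ : ξ ≠ 0) : (y ^ (-ξ)) ^ (-1 / ξ) = y := by
  rw [← rpow_mul hy.le, show -ξ * (-1 / ξ) = 1 by field_simp, rpow_one]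

lemma gev2ScoreSigma_scale_mul_rpow_neg (hσ : σ ≠ 0) (hξ : ξ ≠ 0) (hy : 0 < y) :
    gev2ScoreSigma σ ξ (σ / ξ * y ^ (-ξ)) = (1 - y) / (ξ * σ) := by
  rw [gev2ScoreSigma, mul_div_mul_div_cancel hσ hξ, rpow_neg_rpow_neg_one_div hy hξ]
  ring

lemma gev2ScoreXi_scale_mul_rpow_neg (hσ : σ ≠ 0) (hξ : ξ ≠ 0) (hy : 0 < y) :
    gev2ScoreXi σ ξ (σ / ξ * y ^ (-ξ)) = (-ξ * log y - 1) * (1 - y) / ξ ^ 2 - 1 / ξ := by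
  rw [gev2ScoreXi, mul_div_mul_div_cancel hσ hξ, rpow_neg_rpow_neg_one_div hy hξ, log_rpow hy]
  ring

lemma gev2Pdf_scale_mul_rpow_neg (hσ : σ ≠ 0) (hξ : ξ ≠ 0) (hy : 0 < y) :
    gev2Pdf σ ξ (σ / ξ * y ^ (-ξ)) = y ^ (ξ + 1) / σ * exp (-y) := by
  rw [gev2Pdf, mul_div_mul_div_cancel hσ hξ, rpow_neg_rpow_neg_one_div hy hξ, ← rpow_mul hy.le,
    show -ξ * (-1 - 1 / ξ) = ξ + 1 by field_simp; ring]
  ring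

lemma gev2ScoreSigma_mul_add_gev2ScoreXi (hσ : σ ≠ 0) (hξ : ξ ≠ 0) (hy : 0 < y) (c : ℝ) :
    gev2ScoreSigma σ ξ (σ / ξ * y ^ (-ξ)) *
        (σ * (c + 1 / ξ) * gev2ScoreSigma σ ξ (σ / ξ * y ^ (-ξ)) +
          gev2ScoreXi σ ξ (σ / ξ * y ^ (-ξ))) =
      ((1 - y) ^ 2 * (c - log y) - (1 - y)) / (ξ ^ 2 * σ) := by
  rw [gev2ScoreSigma_scale_mul_rpow_neg hσ hξ hy, gev2ScoreXi_scale_mul_rpow_neg hσ hξ hy]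
  field_simp
  ring

lemma setIntegral_mul_gev2Pdf (hσ : 0 < σ) (hξ : 0 < ξ) (h : ℝ → ℝ) :
    ∫ x in Ioi 0, h x * gev2Pdf σ ξ x = ∫ y in Ioi 0, h (σ / ξ * y ^ (-ξ)) * exp (-y) := by
  have hb : 0 < σ / ξ := div_pos hσ hξ
  have hscale := integral_comp_mul_left_Ioi' (fun x ↦ h x * gev2Pdf σ ξ x) 0 hb
  rw [mul_zero] at hscale
  rw [← hscale, ← integral_comp_rpow_Ioi _ (neg_ne_zero.2 hξ.ne'), smul_eq_mul,
    ← integral_const_mul]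
  refine setIntegral_congr_fun measurableSet_Ioi fun y (hy : 0 < y) ↦ ?_
  rw [gev2Pdf_scale_mul_rpow_neg hσ.ne' hξ.ne' hy, abs_neg, abs_of_pos hξ, smul_eq_mul]
  have hcancel : y ^ (-ξ - 1) * y ^ (ξ + 1) = 1 := by
    rw [← rpow_add hy, show -ξ - 1 + (ξ + 1) = 0 by ring, rpow_zero]
  field_simp
  linear_combination h (σ * y ^ (-ξ) / ξ) * hcancel

end ExponentialSubstitution

theorem gev2_orthogonal_scale_reparam (σ ξ : ℝ) (hσ : 0 < σ) (hξ : 0 < ξ) :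
    ∫ x in Set.Ioi (0 : ℝ),
        gev2ScoreSigma σ ξ x *
          (σ * ((1 - Real.eulerMascheroniConstant) + 1 / ξ) * gev2ScoreSigma σ ξ x
            + gev2ScoreXi σ ξ x) * gev2Pdf σ ξ x = 0 := by
  calc _ = ∫ y in Ioi 0,
        (ξ ^ 2 * σ)⁻¹ * (((1 - y) ^ 2 * ((1 - γ) - log y) - (1 - y)) * exp (-y)) := by
        rw [setIntegral_mul_gev2Pdf hσ hξ]
        refine setIntegral_congr_fun measurableSet_Ioi fun y (hy : 0 < y) ↦ ?_
        rw [gev2ScoreSigma_mul_add_gev2ScoreXi hσ.ne' hξ.ne' hy]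
        ring
    _ = 0 := by
        rw [integral_const_mul, integral_one_sub_sq_mul_sub_log_sub_one_sub_mul_exp_neg, sub_self,
          mul_zero]
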